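/- Let R be an algebra over a field F, let σ be an automorphism of R, and let D be a q-skew σ-derivation on R. Then J(R[x;σ,D]) ∩ R is a two-sided ideal of R that is closed under D, i.e., D(J(R[x;σ,D]) ∩ R) ⊆ J(R[x;σ,D]) ∩ R. -/

import Mathlib

/-- `S` is (a copy of) the Ore extension `R[x;σ,D]` of `R`: `ι : R → S` is the inclusion of
coefficients, `X ∈ S` is the variable, every element of `S` is uniquely a polynomial
`Σᵢ ι(aᵢ) * Xⁱ`, and multiplication is governed by `X * a = σ(a) * X + D(a)`. -/
structure IsOreExtension {R S : Type*} [Ring R] [Ring S]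
    (σ : R → R) (D : R → R) (ι : R → S) (X : S) : Prop where
  σ_add : ∀ a b : R, σ (a + b) = σ a + σ b
  σ_mul : ∀ a b : R, σ (a * b) = σ a * σ b
  σ_one : σ 1 = 1
  D_add : ∀ a b : R, D (a + b) = D a + D b
  D_mul : ∀ a b : R, D (a * b) = σ a * D b + D a * b
  ι_add : ∀ a b : R, ι (a + b) = ι a + ι b
  ι_mul : ∀ a b : R, ι (a * b) = ι a * ι b
  ι_one : ι 1 = 1
  X_comm : ∀ a : R, X * ι a = ι (σ a) * X + ι (D a)
  repr : ∀ s : S, ∃ c : ℕ →₀ R, s = c.sum fun i a => ι a * X ^ i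
  uniq : ∀ c : ℕ →₀ R, (c.sum fun i a => ι a * X ^ i) = 0 → c = 0


/-!
The Jacobson radical of `S = R[x;σ,D]` is invariant under every surjective ring endomorphism of
`S`, and `q`-skewness is exactly what makes `σ` extend to such an endomorphism, namely the one
with `x ↦ q⁻¹ x`. Hence `J(S) ∩ R` is `σ`-stable, and `D(r) = x r - σ(r) x` lies in the
two-sided ideal `J(S)` whenever `r` does.
-/

namespace IsOreExtension

variable {R S T : Type*} [Ring R] [Ring S] [Ring T] {σ D : R → R} {ι : R → S} {X : S}

def ιHom (h : IsOreExtension σ D ι X) : R →+* S :=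
  RingHom.mk' ⟨⟨ι, h.ι_one⟩, h.ι_mul⟩ h.ι_add

def σHom (h : IsOreExtension σ D ι X) : R →+* R :=
  RingHom.mk' ⟨⟨σ, h.σ_one⟩, h.σ_mul⟩ h.σ_add

@[simp] lemma ιHom_apply (h : IsOreExtension σ D ι X) (a : R) : h.ιHom a = ι a := rfl

@[simp] lemma σHom_apply (h : IsOreExtension σ D ι X) (a : R) : h.σHom a = σ a := rfl

noncomputable def sumHom (h : IsOreExtension σ D ι X) : (ℕ →₀ R) →+ S :=
  Finsupp.liftAddHom fun i => (AddMonoidHom.mulRight (X ^ i)).comp h.ιHom.toAddMonoidHom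

lemma sumHom_apply (h : IsOreExtension σ D ι X) (c : ℕ →₀ R) :
    h.sumHom c = c.sum fun i a => ι a * X ^ i :=
  Finsupp.liftAddHom_apply _ c

lemma sumHom_single (h : IsOreExtension σ D ι X) (i : ℕ) (a : R) :
    h.sumHom (Finsupp.single i a) = ι a * X ^ i :=
  Finsupp.liftAddHom_apply_single _ i a

lemma sumHom_bijective (h : IsOreExtension σ D ι X) : Function.Bijective h.sumHom := by
  refine ⟨(injective_iff_map_eq_zero _).2 fun c hc => h.uniq c ?_, fun s => ?_⟩
  · rwa [← h.sumHom_apply]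
  · obtain ⟨c, rfl⟩ := h.repr s
    exact ⟨c, h.sumHom_apply c⟩

noncomputable def coeffEquiv (h : IsOreExtension σ D ι X) : S ≃+ (ℕ →₀ R) :=
  (AddEquiv.ofBijective h.sumHom h.sumHom_bijective).symm

lemma coeffEquiv_monomial (h : IsOreExtension σ D ι X) (a : R) (i : ℕ) :
    h.coeffEquiv (ι a * X ^ i) = Finsupp.single i a := by
  rw [coeffEquiv, AddEquiv.symm_apply_eq, AddEquiv.ofBijective_apply, sumHom_single]

lemma addHom_ext (h : IsOreExtension σ D ι X) {M : Type*} [AddZeroClass M] {f g : S →+ M}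
    (hfg : ∀ (a : R) (i : ℕ), f (ι a * X ^ i) = g (ι a * X ^ i)) : f = g := by
  have hcomp : f.comp h.sumHom = g.comp h.sumHom :=
    Finsupp.addHom_ext fun i a => by
      simpa only [AddMonoidHom.comp_apply, sumHom_single] using hfg a i
  ext s
  obtain ⟨c, rfl⟩ := h.sumHom_bijective.2 s
  exact DFunLike.congr_fun hcomp c

lemma ringHom_ext (h : IsOreExtension σ D ι X) {f g : S →+* T}
    (hι : ∀ a, f (ι a) = g (ι a)) (hX : f X = g X) : f = g :=
  RingHom.ext fun s => DFunLike.congr_fun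
    (h.addHom_ext (f := (f : S →+ T)) (g := (g : S →+ T)) fun a i => by
      simp only [AddMonoidHom.coe_coe, map_mul, map_pow, hι, hX]) s

noncomputable def liftAddHom (h : IsOreExtension σ D ι X) (f : R →+* T) (t : T) : S →+ T :=
  (Finsupp.liftAddHom fun i => (AddMonoidHom.mulRight (t ^ i)).comp f.toAddMonoidHom).comp
    h.coeffEquiv.toAddMonoidHom

lemma liftAddHom_monomial (h : IsOreExtension σ D ι X) (f : R →+* T) (t : T) (a : R) (i : ℕ) :
    h.liftAddHom f t (ι a * X ^ i) = f a * t ^ i := by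
  simp only [liftAddHom, AddMonoidHom.comp_apply, AddEquiv.coe_toAddMonoidHom,
    coeffEquiv_monomial, Finsupp.liftAddHom_apply_single]
  rfl

section Lift

variable (h : IsOreExtension σ D ι X) {f : R →+* T} {t : T}

lemma liftAddHom_X_mul (ht : ∀ a, t * f a = f (σ a) * t + f (D a)) (s : S) :
    h.liftAddHom f t (X * s) = t * h.liftAddHom f t s := by
  refine DFunLike.congr_fun (h.addHom_ext (f := (h.liftAddHom f t).comp (AddMonoidHom.mulLeft X))
    (g := (AddMonoidHom.mulLeft t).comp (h.liftAddHom f t)) fun b j => ?_) s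
  have hXb : X * (ι b * X ^ j) = ι (σ b) * X ^ (j + 1) + ι (D b) * X ^ j := by
    rw [← mul_assoc, h.X_comm, add_mul, mul_assoc, ← pow_succ']
  simp only [AddMonoidHom.comp_apply, AddMonoidHom.coe_mulLeft, hXb, map_add,
    liftAddHom_monomial]
  rw [← mul_assoc, ht, add_mul, pow_succ', mul_assoc]

lemma liftAddHom_X_pow_mul (ht : ∀ a, t * f a = f (σ a) * t + f (D a)) (i : ℕ) (s : S) :
    h.liftAddHom f t (X ^ i * s) = t ^ i * h.liftAddHom f t s := by
  induction i generalizing s with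
  | zero => rw [pow_zero, pow_zero, one_mul, one_mul]
  | succ i ih => rw [pow_succ', mul_assoc, liftAddHom_X_mul h ht, ih, pow_succ', mul_assoc]

lemma liftAddHom_ι_mul (a : R) (s : S) :
    h.liftAddHom f t (ι a * s) = f a * h.liftAddHom f t s := by
  refine DFunLike.congr_fun (h.addHom_ext
    (f := (h.liftAddHom f t).comp (AddMonoidHom.mulLeft (ι a)))
    (g := (AddMonoidHom.mulLeft (f a)).comp (h.liftAddHom f t)) fun b j => ?_) s
  simp only [AddMonoidHom.comp_apply, AddMonoidHom.coe_mulLeft, ← mul_assoc, ← h.ι_mul,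
    liftAddHom_monomial, map_mul]

lemma liftAddHom_mul (ht : ∀ a, t * f a = f (σ a) * t + f (D a)) (s s' : S) :
    h.liftAddHom f t (s * s') = h.liftAddHom f t s * h.liftAddHom f t s' := by
  refine DFunLike.congr_fun (h.addHom_ext
    (f := (h.liftAddHom f t).comp (AddMonoidHom.mulRight s'))
    (g := (AddMonoidHom.mulRight (h.liftAddHom f t s')).comp (h.liftAddHom f t))
    fun a i => ?_) s
  simp only [AddMonoidHom.comp_apply, AddMonoidHom.coe_mulRight, liftAddHom_monomial,
    mul_assoc]
  rw [liftAddHom_ι_mul h, liftAddHom_X_pow_mul h ht]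

noncomputable def lift (ht : ∀ a, t * f a = f (σ a) * t + f (D a)) : S →+* T where
  __ := h.liftAddHom f t
  map_one' := show h.liftAddHom f t 1 = 1 by
    simpa only [h.ι_one, pow_zero, mul_one, map_one] using h.liftAddHom_monomial f t 1 0
  map_mul' := liftAddHom_mul h ht

lemma lift_ι (ht : ∀ a, t * f a = f (σ a) * t + f (D a)) (a : R) : h.lift ht (ι a) = f a :=
  show h.liftAddHom f t (ι a) = f a by
    simpa only [pow_zero, mul_one] using h.liftAddHom_monomial f t a 0

lemma lift_X (ht : ∀ a, t * f a = f (σ a) * t + f (D a)) : h.lift ht X = t :=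
  show h.liftAddHom f t X = t by
    simpa only [h.ι_one, pow_one, one_mul, map_one] using h.liftAddHom_monomial f t 1 1

end Lift

lemma twist_comm (h : IsOreExtension σ D ι X) {θ : R →+* R} (hθσ : ∀ a, θ (σ a) = σ (θ a))
    {c : R} (hc : ∀ a, Commute c a) (hD : ∀ b, c * D (θ b) = θ (D b)) (b : R) :
    ι c * X * h.ιHom.comp θ b = h.ιHom.comp θ (σ b) * (ι c * X) + h.ιHom.comp θ (D b) := by
  have hcomm : ι c * ι (σ (θ b)) = ι (σ (θ b)) * ι c := by
    rw [← h.ι_mul, ← h.ι_mul, (hc _).eq]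
  simp only [RingHom.comp_apply, ιHom_apply]
  calc ι c * X * ι (θ b) = ι c * ι (σ (θ b)) * X + ι (c * D (θ b)) := by
        rw [mul_assoc, h.X_comm, mul_add, mul_assoc, h.ι_mul]
    _ = _ := by rw [hcomm, hD, hθσ, mul_assoc]

lemma exists_surjective_extension_σ {F : Type*} [Field F] [Algebra F R]
    (h : IsOreExtension σ D ι X) (hσ : Function.Bijective σ) {q : F} (hq : q ≠ 0)
    (hskew : ∀ a : R, D (σ a) = q • σ (D a)) :
    ∃ τ : S →+* S, Function.Surjective τ ∧ ∀ a, τ (ι a) = ι (σ a) := by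
  let σe := RingEquiv.ofBijective h.σHom hσ
  have hσσe (a : R) : σ (σe.symm a) = a := σe.apply_symm_apply a
  have hσeσ (a : R) : σe.symm (σ a) = a := σe.symm_apply_apply a
  have hτ := h.twist_comm (θ := h.σHom) (c := algebraMap F R q⁻¹) (fun _ => rfl)
    (Algebra.commute_algebraMap_left _) fun b => by
      rw [σHom_apply, hskew, Algebra.smul_def, ← mul_assoc, ← map_mul, inv_mul_cancel₀ hq,
        map_one, one_mul, σHom_apply]
  -- The inverse twist sends `X` to `σ⁻¹(q) X`, not `q X`: `σ` need not be `F`-linear.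
  have hτ' := h.twist_comm (θ := σe.symm.toRingHom) (c := σe.symm (algebraMap F R q))
    (fun a => by simp [hσσe, hσeσ]) (fun a => by simpa [hσeσ] using
      (Algebra.commute_algebraMap_left q (σ a)).map σe.symm.toRingHom) fun b => by
      have hb := hskew (σe.symm b)
      rw [hσσe, Algebra.smul_def] at hb
      simp only [RingEquiv.toRingHom_eq_coe, RingEquiv.coe_toRingHom]
      rw [hb, map_mul, hσeσ]
  have hid : (h.lift hτ).comp (h.lift hτ') = RingHom.id S := by
    refine h.ringHom_ext (fun a => ?_) ?_
    · simp [lift_ι, hσσe]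
    · rw [RingHom.comp_apply, lift_X, map_mul, lift_X, lift_ι]
      simp only [RingHom.comp_apply, ιHom_apply, σHom_apply, hσσe, RingHom.id_apply]
      rw [← mul_assoc, ← h.ι_mul, ← map_mul, mul_inv_cancel₀ hq, map_one, h.ι_one, one_mul]
  exact ⟨h.lift hτ, fun s => ⟨h.lift hτ' s, RingHom.congr_fun hid s⟩, h.lift_ι hτ⟩

end IsOreExtension

/-- If `R` is an algebra over a field `F`, `σ` is an automorphism of `R` and `D` is a `q`-skew
`σ`-derivation, then `J(R[x;σ,D]) ∩ R` is a two-sided ideal of `R` closed under `D`. -/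
theorem jacobson_cap_isTwoSidedIdeal_closed_under_D {F R S : Type*} [Field F]
    [Ring R] [Algebra F R] [Ring S]
    (σ D : R → R) (ι : R → S) (X : S)
    (hOre : IsOreExtension σ D ι X) (hσ : Function.Bijective σ)
    (q : F) (hq : q ≠ 0) (hskew : ∀ a : R, D (σ a) = q • σ (D a)) :
    ∃ I : TwoSidedIdeal R,
      (∀ r : R, r ∈ I ↔ ι r ∈ (⊥ : Ideal S).jacobson) ∧ ∀ r ∈ I, D r ∈ I := by
  obtain ⟨τ, hτ, hτι⟩ := hOre.exists_surjective_extension_σ hσ hq hskew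
  have : RingHomSurjective τ := ⟨hτ⟩
  refine ⟨TwoSidedIdeal.comap hOre.ιHom (Ring.jacobson S).toTwoSided, fun r => ?_, fun r hr => ?_⟩
  · simp [Ideal.jacobson_bot, TwoSidedIdeal.mem_comap]
  · simp only [TwoSidedIdeal.mem_comap, Ideal.mem_toTwoSided, IsOreExtension.ιHom_apply] at hr ⊢
    have hσr : ι (σ r) ∈ Ring.jacobson S := hτι r ▸ Ring.le_comap_jacobson τ hr
    rw [show ι (D r) = X * ι r - ι (σ r) * X by rw [hOre.X_comm, add_sub_cancel_left]]
    exact sub_mem (Ideal.mul_mem_left _ X hr) (Ideal.mul_mem_right X _ hσr)
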